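/- Let D be a probability distribution over linear maps on 2^n×2^n complex matrices. Then D is Pauli-invariant if and only if for all P, Q ∈ P_n with P ≠ Q: E_{C∼D}[C(P) ⊗ C(Q)] = 0. In that case, for every Hermitian observable O = Σ_{P∈P_n} a_P P: E_{C∼D}[C(O) ⊗ C(O)] = Σ_{P∈P_n} a_P² · E_{C∼D}[C(P) ⊗ C(P)]. -/

import Mathlib

open scoped Kronecker
open Matrix
open scoped ComplexOrder

noncomputable section

abbrev QMat := Matrix (Fin 2) (Fin 2) ℂ

abbrev NMat (n : ℕ) := Matrix (Fin n → Fin 2) (Fin n → Fin 2) ℂ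

/-- The four single-qubit Pauli matrices `I, X, Y, Z`. -/
def pauli : Fin 4 → QMat :=
  ![1, !![0, 1; 1, 0], !![0, -Complex.I; Complex.I, 0], !![1, 0; 0, -1]]

/-- The non-identity Paulis `X, Y, Z`. -/
def pauliXYZ (i : Fin 3) : QMat := pauli i.succ

/-- The `n`-qubit Pauli string indexed by `s : Fin n → Fin 4`. -/
def pauliString {n : ℕ} (s : Fin n → Fin 4) : NMat n :=
  Matrix.of fun i j => ∏ k, pauli (s k) (i k) (j k)

/-- Support of a Pauli string. -/
def psupp {n : ℕ} (s : Fin n → Fin 4) : Finset (Fin n) :=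
  Finset.univ.filter fun k => s k ≠ 0

/-- The observable with real Pauli coefficients `a`. -/
def obsOf {n : ℕ} (a : (Fin n → Fin 4) → ℝ) : NMat n :=
  ∑ s : Fin n → Fin 4, (a s : ℂ) • pauliString s

/-- Normalized Frobenius norm squared, `‖M‖_F² = Tr[Mᴴ M]/dim`. -/
def frobSq {m : Type*} [Fintype m] (M : Matrix m m ℂ) : ℝ :=
  (Matrix.trace (Mᴴ * M)).re / (Fintype.card m : ℝ)

def IsUnitary {m : Type*} [Fintype m] [DecidableEq m] (U : Matrix m m ℂ) : Prop :=
  U * Uᴴ = 1 ∧ Uᴴ * U = 1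

/-- Hilbert–Schmidt adjoint of a (linear) map on matrices:
`Φ†(A) i j = conj (Tr[Aᴴ Φ(E_{ij})])`. -/
def hsAdj {m : Type*} [Fintype m] [DecidableEq m]
    (Φ : Matrix m m ℂ → Matrix m m ℂ) (A : Matrix m m ℂ) : Matrix m m ℂ :=
  Matrix.of fun i j => (starRingEnd ℂ) (Matrix.trace (Aᴴ * Φ (Matrix.single i j 1)))

/-- Pauli transfer matrix entry of a single-qubit map. -/
def ptm (Φ : QMat → QMat) (a b : Fin 4) : ℂ :=
  Matrix.trace (pauli a * Φ (pauli b)) / 2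

/-- Tensor product `Φ 0 ⊗ Φ 1 ⊗ ⋯ ⊗ Φ (n-1)` of single-qubit (linear) maps,
defined via the Pauli transfer matrices. -/
def tensorMap {n : ℕ} (Φ : Fin n → QMat → QMat) (M : NMat n) : NMat n :=
  ∑ s : Fin n → Fin 4, ∑ t : Fin n → Fin 4,
    ((∏ k, ptm (Φ k) (s k) (t k)) * (Matrix.trace (pauliString t * M) / ((2 : ℂ) ^ n))) •
      pauliString s

/-- `n`-fold tensor power `Φ^{⊗n}` of a single-qubit (linear) map. -/
def tensorPow (n : ℕ) (Φ : QMat → QMat) : NMat n → NMat n :=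
  tensorMap fun _ => Φ

/-- Tensor product of `n` single-qubit matrices. -/
def qprod {n : ℕ} (V : Fin n → QMat) : NMat n :=
  Matrix.of fun i j => ∏ k, V k (i k) (j k)

/-- The single-qubit normal-form map `N'` with parameters `(D, t)`:
`N'(I) = I + Σ t_i σ_i` and `N'(σ_i) = D_i σ_i`. -/
def normalForm (D t : Fin 3 → ℝ) (M : QMat) : QMat :=
  (Matrix.trace M / 2) • (1 + ∑ i, (t i : ℂ) • pauliXYZ i) +
    ∑ i, ((D i : ℂ) * (Matrix.trace (pauliXYZ i * M) / 2)) • pauliXYZ i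

/-- `Υ(D,t) = max_{‖a‖₂=1} Σ_i a_i² D_i² + (Σ_i a_i t_i)²`. -/
def Upsilon (D t : Fin 3 → ℝ) : ℝ :=
  sSup { r : ℝ | ∃ a : Fin 3 → ℝ, (∑ i, a i ^ 2) = 1 ∧
    r = (∑ i, a i ^ 2 * D i ^ 2) + (∑ i, a i * t i) ^ 2 }

/-- Choi matrix of a single-qubit map. -/
def choi (Φ : QMat → QMat) : Matrix (Fin 2 × Fin 2) (Fin 2 × Fin 2) ℂ :=
  Matrix.of fun p q => Φ (Matrix.single p.1 q.1 1) p.2 q.2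

/-- A single-qubit quantum channel: linear, trace preserving, completely positive. -/
structure IsChannel (Φ : QMat → QMat) : Prop where
  linear : IsLinearMap ℂ Φ
  tracePreserving : ∀ M, Matrix.trace (Φ M) = Matrix.trace M
  completelyPositive : (choi Φ).PosSemidef

/-- Unitary 1-design (finitely supported distribution). -/
def IsOneDesign {ι : Type*} [Fintype ι] (w : ι → ℝ) (W : ι → QMat) : Prop :=
  ∀ M : QMat, ∑ i, (w i : ℂ) • (W i * M * (W i)ᴴ) = (Matrix.trace M / 2) • (1 : QMat)

/-- The swap (flip) operator on two qubits. -/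
def swapOp : Matrix (Fin 2 × Fin 2) (Fin 2 × Fin 2) ℂ :=
  Matrix.of fun p q => if p.1 = q.2 ∧ p.2 = q.1 then 1 else 0

/-- Unitary 2-design: the twirl of any `M` matches the Haar value
`c_I • 1 + c_F • F` (closed form of the Haar average on `U(2)`). -/
def IsTwoDesign {ι : Type*} [Fintype ι] (w : ι → ℝ) (W : ι → QMat) : Prop :=
  ∀ M : Matrix (Fin 2 × Fin 2) (Fin 2 × Fin 2) ℂ,
    ∑ i, (w i : ℂ) • ((W i ⊗ₖ W i) * M * (W i ⊗ₖ W i)ᴴ) =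
      ((Matrix.trace M - Matrix.trace (swapOp * M) / 2) / 3) •
          (1 : Matrix (Fin 2 × Fin 2) (Fin 2 × Fin 2) ℂ) +
        ((Matrix.trace (swapOp * M) - Matrix.trace M / 2) / 3) • swapOp

/-- `η`-approximate scrambler (finitely supported distribution over `U(2)`). -/
def IsApproxScrambler {ι : Type*} [Fintype ι] (η : ℝ) (w : ι → ℝ) (U : ι → QMat) : Prop :=
  (∀ a b : Fin 4, a ≠ b →
      ∑ i, (w i : ℂ) • (((U i)ᴴ * pauli a * U i) ⊗ₖ ((U i)ᴴ * pauli b * U i)) = 0) ∧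
    ∀ a b : Fin 3,
      ∑ i, w i * ((Matrix.trace (pauliXYZ a * U i * pauliXYZ b * (U i)ᴴ)).re / 2) ^ 2 ≤
        (1 + 2 * η) / 3

/-- Locally unbiased distribution over linear maps on `n`-qubit matrices. -/
def LocallyUnbiased (n : ℕ) {ι : Type*} [Fintype ι] (w : ι → ℝ)
    (C : ι → NMat n → NMat n) : Prop :=
  ∃ (m : ℕ) (v : Fin n → Fin m → ℝ) (W : Fin n → Fin m → QMat),
    (∀ j k, 0 ≤ v j k) ∧ (∀ j, ∑ k, v j k = 1) ∧ (∀ j k, IsUnitary (W j k)) ∧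
      (∀ j, IsOneDesign (v j) (W j)) ∧
      ∀ A B : NMat n,
        ∑ i, (w i : ℂ) • (C i A ⊗ₖ C i B) =
          ∑ i, ∑ f : Fin n → Fin m,
            ((w i * ∏ j, v j (f j) : ℝ) : ℂ) •
              (C i (qprod (fun j => W j (f j)) * A * (qprod fun j => W j (f j))ᴴ) ⊗ₖ
                C i (qprod (fun j => W j (f j)) * B * (qprod fun j => W j (f j))ᴴ))

/-- Pauli-invariant distribution over linear maps on `n`-qubit matrices. -/
def PauliInvariant (n : ℕ) {ι : Type*} [Fintype ι] (w : ι → ℝ)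
    (C : ι → NMat n → NMat n) : Prop :=
  ∀ A B : NMat n,
    ∑ i, (w i : ℂ) • (C i A ⊗ₖ C i B) =
      ((4 : ℂ) ^ n)⁻¹ • ∑ r : Fin n → Fin 4, ∑ i, (w i : ℂ) •
        (C i (pauliString r * A * pauliString r) ⊗ₖ C i (pauliString r * B * pauliString r))

/-- Fourier coefficient `Φ_γ(C) = Π_j 2^{-n} Tr[P_j C_j(P_{j-1})]` of a Pauli path. -/
def pathCoeff {n L : ℕ} (Cs : Fin L → NMat n → NMat n)
    (γ : Fin (L + 1) → Fin n → Fin 4) : ℂ :=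
  ∏ j : Fin L,
    (Matrix.trace (pauliString (γ j.succ) * Cs j (pauliString (γ j.castSucc))) / ((2 : ℂ) ^ n))

/-- Path weight `|γ| = Σ_{j=1}^L |P_j|`. -/
def pathWeight {n L : ℕ} (γ : Fin (L + 1) → Fin n → Fin 4) : ℕ :=
  ∑ j : Fin L, (psupp (γ j.succ)).card

/-- The (non-physical) map `Ñ_p` with `Ñ_p(I) = (N(I) - pI)/(1-p)` and
`Ñ_p(σ) = N(σ)/(1-p)` for `σ ∈ {X,Y,Z}`. -/
def tildeMap (N : QMat → QMat) (p : ℝ) (M : QMat) : QMat :=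
  (Matrix.trace M / 2) • (((1 : ℂ) - (p : ℂ))⁻¹ • (N 1 - (p : ℂ) • (1 : QMat))) +
    ∑ i : Fin 3, (Matrix.trace (pauliXYZ i * M) / 2) • (((1 : ℂ) - (p : ℂ))⁻¹ • N (pauliXYZ i))

/-- The layers of an `L`-layered noisy circuit: `C_j(ρ) = N^{⊗n}(U_j ρ U_j†)` for `j < L`,
and the last layer is followed by the single-qubit layer `V`. -/
def layerMaps {n L : ℕ} (Nm : QMat → QMat) (U : Fin L → NMat n) (Vt : NMat n)
    (j : Fin L) (ρ : NMat n) : NMat n :=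
  if j.val = L - 1 then Vt * tensorPow n Nm (U j * ρ * (U j)ᴴ) * Vtᴴ
  else tensorPow n Nm (U j * ρ * (U j)ᴴ)

/-- Composition `C_L ∘ ⋯ ∘ C_1` of the layers. -/
def circuitOf {n L : ℕ} (lm : Fin L → NMat n → NMat n) (ρ : NMat n) : NMat n :=
  (List.finRange L).foldl (fun σ j => lm j σ) ρ

/-- Operator (spectral) norm of a matrix, as the `ℓ²→ℓ²` operator norm. -/
def specNorm {m : Type*} [Fintype m] (M : Matrix m m ℂ) : ℝ :=
  Real.sqrt (sSup { r : ℝ | ∃ v : m → ℂ,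
    (∑ x, Complex.normSq (v x)) = 1 ∧ r = ∑ x, Complex.normSq (M.mulVec v x) })

/-- Trace norm `‖M‖₁ = Tr √(Mᴴ M)` (sum of singular values). -/
def traceNorm {m : Type*} [Fintype m] [DecidableEq m] (M : Matrix m m ℂ) : ℝ :=
  (Matrix.trace
    ((Matrix.posSemidef_conjTranspose_mul_self M).1.eigenvectorUnitary.1 *
      Matrix.diagonal (((↑) : ℝ → ℂ) ∘ (√·) ∘ (Matrix.posSemidef_conjTranspose_mul_self M).1.eigenvalues) *
      (star (Matrix.posSemidef_conjTranspose_mul_self M).1.eigenvectorUnitary : Matrix m m ℂ))).re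

/-! Conjugating one Pauli matrix by another gives it back up to the sign `+1` if they commute
and `-1` if they anticommute. Averaging these signs over all conjugating Paulis is a character
sum, which vanishes unless the two Pauli strings coincide; hence the Pauli twirl of
`C(P) ⊗ C(Q)` is `C(P) ⊗ C(P)` when `P = Q` and `0` otherwise. Expanding arbitrary `A, B`
in the Pauli basis, both the second moment `E[C(A) ⊗ C(B)]` and its twirl are determined by
their values on pairs of Pauli strings, which gives both parts of the theorem. -/

def pauliConjSign (a b : Fin 4) : ℂ := if a = 0 ∨ b = 0 ∨ a = b then 1 else -1

lemma pauli_mul_pauli_mul_self (a b : Fin 4) :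
    pauli a * pauli b * pauli a = pauliConjSign a b • pauli b := by
  fin_cases a <;> fin_cases b <;>
    · ext i j
      fin_cases i <;> fin_cases j <;>
        simp [pauli, pauliConjSign, Matrix.mul_apply, Fin.sum_univ_two]

lemma sum_pauliConjSign_mul (b c : Fin 4) :
    ∑ a : Fin 4, pauliConjSign a b * pauliConjSign a c = if b = c then 4 else 0 := by
  fin_cases b <;> fin_cases c <;> simp [pauliConjSign, Fin.sum_univ_four] <;> norm_num

lemma sum_pauli_apply_mul_pauli_apply (x y i j : Fin 2) :
    ∑ a : Fin 4, pauli a x y * pauli a i j = if x = j ∧ y = i then 2 else 0 := by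
  fin_cases x <;> fin_cases y <;> fin_cases i <;> fin_cases j <;>
    simp [pauli, Fin.sum_univ_four] <;> norm_num

lemma qprod_mul_qprod {n : ℕ} (V W : Fin n → QMat) :
    qprod V * qprod W = qprod fun k => V k * W k := by
  ext i j
  simp only [Matrix.mul_apply, qprod, Matrix.of_apply]
  rw [Fintype.prod_sum fun k b => V k (i k) b * W k b (j k)]
  exact Finset.sum_congr rfl fun _ _ => Finset.prod_mul_distrib.symm

lemma qprod_smul {n : ℕ} (c : Fin n → ℂ) (V : Fin n → QMat) :
    (qprod fun k => c k • V k) = (∏ k, c k) • qprod V := by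
  ext i j
  simp only [qprod, Matrix.of_apply, Matrix.smul_apply, smul_eq_mul, ← Finset.prod_mul_distrib]

def pauliStringConjSign {n : ℕ} (r s : Fin n → Fin 4) : ℂ := ∏ k, pauliConjSign (r k) (s k)

lemma pauliString_mul_pauliString_mul_self {n : ℕ} (r s : Fin n → Fin 4) :
    pauliString r * pauliString s * pauliString r =
      pauliStringConjSign r s • pauliString s := by
  change qprod _ * qprod _ * qprod _ = _
  simp only [qprod_mul_qprod, pauli_mul_pauli_mul_self, qprod_smul]
  rfl

lemma sum_pauliStringConjSign_mul {n : ℕ} (s t : Fin n → Fin 4) :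
    ∑ r, pauliStringConjSign r s * pauliStringConjSign r t =
      if s = t then (4 : ℂ) ^ n else 0 := by
  simp only [pauliStringConjSign, ← Finset.prod_mul_distrib]
  rw [← Fintype.prod_sum fun k a => pauliConjSign a (s k) * pauliConjSign a (t k)]
  simp only [sum_pauliConjSign_mul]
  split_ifs with hst
  · simp [hst]
  · obtain ⟨k, hk⟩ := Function.ne_iff.mp hst
    exact Finset.prod_eq_zero (Finset.mem_univ k) (if_neg hk)

lemma sum_pauliString_apply_mul_pauliString_apply {n : ℕ} (x y i j : Fin n → Fin 2) :
    ∑ s, pauliString s x y * pauliString s i j =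
      if x = j ∧ y = i then (2 : ℂ) ^ n else 0 := by
  simp only [pauliString, Matrix.of_apply, ← Finset.prod_mul_distrib]
  rw [← Fintype.prod_sum fun k a => pauli a (x k) (y k) * pauli a (i k) (j k)]
  simp only [sum_pauli_apply_mul_pauli_apply]
  split_ifs with h
  · simp [h.1, h.2]
  · obtain ⟨k, hk⟩ : ∃ k, ¬(x k = j k ∧ y k = i k) := by
      by_contra! hc
      exact h ⟨funext fun k => (hc k).1, funext fun k => (hc k).2⟩
    exact Finset.prod_eq_zero (Finset.mem_univ k) (if_neg hk)

def pauliCoeff {n : ℕ} (s : Fin n → Fin 4) (M : NMat n) : ℂ :=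
  Matrix.trace (pauliString s * M) / (2 : ℂ) ^ n

lemma sum_pauliCoeff_smul_pauliString {n : ℕ} (M : NMat n) :
    ∑ s, pauliCoeff s M • pauliString s = M := by
  ext i j
  calc (∑ s, pauliCoeff s M • pauliString s) i j
      = ∑ x, ∑ y, (∑ s, pauliString s x y * pauliString s i j) * M y x / (2 : ℂ) ^ n := by
        simp only [Matrix.sum_apply, Matrix.smul_apply, smul_eq_mul, pauliCoeff, Matrix.trace,
          Matrix.diag_apply, Matrix.mul_apply, Finset.sum_mul, Finset.sum_div]
        rw [Finset.sum_comm]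
        refine Finset.sum_congr rfl fun x _ => ?_
        rw [Finset.sum_comm]
        exact Finset.sum_congr rfl fun y _ => Finset.sum_congr rfl fun s _ => by ring
    _ = M i j := by
        simp [sum_pauliString_apply_mul_pauliString_apply, ite_and, apply_ite (· / (2 : ℂ) ^ n)]

lemma mul_sum_smul_mul {m R : Type*} [Fintype m] [CommSemiring R] {σ : Type*} [Fintype σ]
    (X : Matrix m m R) (c : σ → R) (Y : σ → Matrix m m R) :
    X * (∑ s, c s • Y s) * X = ∑ s, c s • (X * Y s * X) := by
  simp only [Finset.mul_sum, Finset.sum_mul, mul_smul_comm, smul_mul_assoc]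

section Moments

variable {m ι : Type*} [Fintype ι] (w : ι → ℝ) (C : ι → Matrix m m ℂ → Matrix m m ℂ)

def pairMoment (A B : Matrix m m ℂ) : Matrix (m × m) (m × m) ℂ :=
  ∑ i, (w i : ℂ) • (C i A ⊗ₖ C i B)

variable {w C}

lemma pairMoment_sum_smul_sum_smul (hlin : ∀ i, IsLinearMap ℂ (C i))
    {σ τ : Type*} [Fintype σ] [Fintype τ] (c : σ → ℂ) (d : τ → ℂ)
    (X : σ → Matrix m m ℂ) (Y : τ → Matrix m m ℂ) :
    pairMoment w C (∑ s, c s • X s) (∑ t, d t • Y t) =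
      ∑ s, ∑ t, (c s * d t) • pairMoment w C (X s) (Y t) := by
  obtain ⟨L, rfl⟩ :
      ∃ L : ι → Matrix m m ℂ →ₗ[ℂ] Matrix m m ℂ, C = fun i => ⇑(L i) :=
    ⟨fun i => IsLinearMap.mk' _ (hlin i), rfl⟩
  let K : Matrix m m ℂ →ₗ[ℂ] Matrix m m ℂ →ₗ[ℂ] Matrix (m × m) (m × m) ℂ :=
    kroneckerBilinear (R := ℂ)
  change ∑ i, (w i : ℂ) • K (L i _) (L i _) =
    ∑ s, ∑ t, (c s * d t) • ∑ i, (w i : ℂ) • K (L i _) (L i _)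
  simp only [map_sum, map_smul, LinearMap.sum_apply, LinearMap.smul_apply, Finset.smul_sum,
    smul_smul]
  conv_lhs => rw [Finset.sum_comm]
  conv_rhs => rw [Finset.sum_comm]
  refine Finset.sum_congr rfl fun t _ => ?_
  rw [Finset.sum_comm]
  exact Finset.sum_congr rfl fun s _ => Finset.sum_congr rfl fun i _ => by ring_nf

end Moments

section PauliTwirl

variable {n : ℕ} {ι : Type*} [Fintype ι] (w : ι → ℝ) (C : ι → NMat n → NMat n)

def pauliTwirl (A B : NMat n) :
    Matrix ((Fin n → Fin 2) × (Fin n → Fin 2)) ((Fin n → Fin 2) × (Fin n → Fin 2)) ℂ :=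
  ((4 : ℂ) ^ n)⁻¹ • ∑ r, pairMoment w C
    (pauliString r * A * pauliString r) (pauliString r * B * pauliString r)

variable {w C}

lemma pauliInvariant_iff :
    PauliInvariant n w C ↔ ∀ A B, pairMoment w C A B = pauliTwirl w C A B :=
  Iff.rfl

lemma pairMoment_eq_sum_pauliString (hlin : ∀ i, IsLinearMap ℂ (C i)) (A B : NMat n) :
    pairMoment w C A B = ∑ s, ∑ t, (pauliCoeff s A * pauliCoeff t B) •
      pairMoment w C (pauliString s) (pauliString t) := by
  conv_lhs => rw [← sum_pauliCoeff_smul_pauliString A, ← sum_pauliCoeff_smul_pauliString B]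
  exact pairMoment_sum_smul_sum_smul hlin _ _ _ _

lemma pauliTwirl_pauliString (hlin : ∀ i, IsLinearMap ℂ (C i)) (s t : Fin n → Fin 4) :
    pauliTwirl w C (pauliString s) (pauliString t) =
      if s = t then pairMoment w C (pauliString s) (pauliString t) else 0 := by
  have hconj : ∀ r, pairMoment w C (pauliString r * pauliString s * pauliString r)
      (pauliString r * pauliString t * pauliString r) =
        (pauliStringConjSign r s * pauliStringConjSign r t) •
          pairMoment w C (pauliString s) (pauliString t) := fun r => by
    simpa only [pauliString_mul_pauliString_mul_self, Fintype.sum_unique] using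
      pairMoment_sum_smul_sum_smul hlin (σ := Unit) (τ := Unit)
        (fun _ => pauliStringConjSign r s) (fun _ => pauliStringConjSign r t)
        (fun _ => pauliString s) (fun _ => pauliString t)
  rw [pauliTwirl, Finset.sum_congr rfl fun r _ => hconj r, ← Finset.sum_smul,
    sum_pauliStringConjSign_mul]
  split_ifs
  · rw [smul_smul, inv_mul_cancel₀ (pow_ne_zero _ four_ne_zero), one_smul]
  · rw [zero_smul, smul_zero]

lemma pauliTwirl_eq_sum_pauliString (hlin : ∀ i, IsLinearMap ℂ (C i)) (A B : NMat n) :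
    pauliTwirl w C A B =
      ∑ s, (pauliCoeff s A * pauliCoeff s B) •
        pairMoment w C (pauliString s) (pauliString s) := by
  have hbilin : pauliTwirl w C A B = ∑ s, ∑ t, (pauliCoeff s A * pauliCoeff t B) •
      pauliTwirl w C (pauliString s) (pauliString t) := by
    conv_lhs => rw [← sum_pauliCoeff_smul_pauliString A, ← sum_pauliCoeff_smul_pauliString B]
    simp only [pauliTwirl, mul_sum_smul_mul, pairMoment_sum_smul_sum_smul hlin, Finset.smul_sum]
    rw [Finset.sum_comm]
    refine Finset.sum_congr rfl fun s _ => ?_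
    rw [Finset.sum_comm]
    exact Finset.sum_congr rfl fun t _ => Finset.sum_congr rfl fun r _ => smul_comm _ _ _
  rw [hbilin]
  refine Finset.sum_congr rfl fun s _ => ?_
  rw [Finset.sum_eq_single s (fun t _ hts => by
      rw [pauliTwirl_pauliString hlin, if_neg (Ne.symm hts), smul_zero]) (by simp),
    pauliTwirl_pauliString hlin, if_pos rfl]

lemma pauliInvariant_iff_pairMoment_pauliString_eq_zero (hlin : ∀ i, IsLinearMap ℂ (C i)) :
    PauliInvariant n w C ↔
      ∀ s t, s ≠ t → pairMoment w C (pauliString s) (pauliString t) = 0 := by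
  rw [pauliInvariant_iff]
  refine ⟨fun h s t hst => ?_, fun h A B => ?_⟩
  · rw [h, pauliTwirl_pauliString hlin, if_neg hst]
  · rw [pauliTwirl_eq_sum_pauliString hlin, pairMoment_eq_sum_pauliString hlin]
    refine Finset.sum_congr rfl fun s _ => Finset.sum_eq_single s (fun t _ hts => ?_) (by simp)
    rw [h s t (Ne.symm hts), smul_zero]

lemma PauliInvariant.pairMoment_sum_smul_pauliString (hlin : ∀ i, IsLinearMap ℂ (C i))
    (h : PauliInvariant n w C) (c : (Fin n → Fin 4) → ℂ) :
    pairMoment w C (∑ s, c s • pauliString s) (∑ s, c s • pauliString s) =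
      ∑ s, c s ^ 2 • pairMoment w C (pauliString s) (pauliString s) := by
  have h_off_diag := (pauliInvariant_iff_pairMoment_pauliString_eq_zero hlin).mp h
  rw [pairMoment_sum_smul_sum_smul hlin]
  refine Finset.sum_congr rfl fun s _ => ?_
  rw [Finset.sum_eq_single s (fun t _ hts => by rw [h_off_diag s t (Ne.symm hts), smul_zero])
    (by simp), sq]

end PauliTwirl

theorem stmt_9_general (n : ℕ) {ι : Type*} [Fintype ι] (w : ι → ℝ)
    (C : ι → NMat n → NMat n)
    (hlin : ∀ i, IsLinearMap ℂ (C i)) :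
    (PauliInvariant n w C ↔
      ∀ s s' : Fin n → Fin 4, s ≠ s' →
        ∑ i, (w i : ℂ) • (C i (pauliString s) ⊗ₖ C i (pauliString s')) = 0) ∧
    (PauliInvariant n w C →
      ∀ a : (Fin n → Fin 4) → ℝ,
        ∑ i, (w i : ℂ) • (C i (obsOf a) ⊗ₖ C i (obsOf a)) =
          ∑ s : Fin n → Fin 4, (a s : ℂ) ^ 2 •
            ∑ i, (w i : ℂ) • (C i (pauliString s) ⊗ₖ C i (pauliString s))) :=
  ⟨pauliInvariant_iff_pairMoment_pauliString_eq_zero hlin,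
    fun h a => h.pairMoment_sum_smul_pauliString hlin fun s => (a s : ℂ)⟩

/-- (Orthogonality for Pauli-invariant distributions.) `D` is
Pauli-invariant iff `E_C[C(P) ⊗ C(Q)] = 0` for all distinct Paulis `P ≠ Q`; in that case
the two-fold twirl of any observable splits as a sum over Pauli strings. -/
theorem stmt_9 (n : ℕ) {ι : Type*} [Fintype ι] (w : ι → ℝ)
    (C : ι → NMat n → NMat n)
    (hw0 : ∀ i, 0 ≤ w i) (hw1 : ∑ i, w i = 1)
    (hlin : ∀ i, IsLinearMap ℂ (C i)) :
    (PauliInvariant n w C ↔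
      ∀ s s' : Fin n → Fin 4, s ≠ s' →
        ∑ i, (w i : ℂ) • (C i (pauliString s) ⊗ₖ C i (pauliString s')) = 0) ∧
    (PauliInvariant n w C →
      ∀ a : (Fin n → Fin 4) → ℝ,
        ∑ i, (w i : ℂ) • (C i (obsOf a) ⊗ₖ C i (obsOf a)) =
          ∑ s : Fin n → Fin 4, (a s : ℂ) ^ 2 •
            ∑ i, (w i : ℂ) • (C i (pauliString s) ⊗ₖ C i (pauliString s))) :=
  stmt_9_general n w C hlin

end
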